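/- arXiv:1608.02242 — 2 statements merged into one kernel-verified Lean document; each statement's English description precedes it below -/
import Mathlib

section
/- Fix a free ultrafilter ω on ℕ. There exists a Borel probability measure μ on the compact Hausdorff space Ultrafilter X such that: (a) for every subset A ⊆ X, the sequence i ↦ |A ∩ X_i| / |X_i| converges along ω to μ({η ∈ Ultrafilter X : A ∈ η}); (b) μ is invariant under σ̄(g) for every g ∈ Γ, i.e. the pushforward of μ under σ̄(g) equals μ; and (c) μ(Z) = 1, where Z := ⋂_{g ∈ Γ} σ̄(g)''(∂Y) is the core; in particular the set of free ultrafilters has μ-measure 1 and μ(∂Y) = 1. -/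
open scoped BigOperators symmDiff Classical

universe u v

/-- A sofic approximation of a group `Γ` generated by a finite symmetric set `S`. -/
structure SoficApprox (Γ : Type u) [Group Γ] (S : Finset Γ) where
  F : ℕ → Finset Γ
  F_mono : Monotone F
  F_one : ∀ i, (1 : Γ) ∈ F i
  F_exhausts : ∀ g : Γ, ∃ i, g ∈ F i
  eps : ℕ → ℝ
  eps_pos : ∀ i, 0 < eps i
  eps_lim : Filter.Tendsto eps Filter.atTop (nhds 0)
  X : ℕ → Type
  finX : ∀ i, Finite (X i)
  neX : ∀ i, Nonempty (X i)
  sigma : (i : ℕ) → Γ → Equiv.Perm (X i)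
  Y : (i : ℕ) → Set (X i)
  Y_large : ∀ i, (1 - eps i) * (Nat.card (X i) : ℝ) ≤ ((Y i).ncard : ℝ)
  sigma_mul : ∀ i, ∀ g ∈ F i, ∀ h ∈ F i, ∀ y ∈ Y i, sigma i g (sigma i h y) = sigma i (g * h) y
  sigma_free : ∀ i, ∀ g ∈ F i, g ≠ 1 → ∀ y ∈ Y i, sigma i g y ≠ y

namespace SoficApprox

variable {Γ : Type u} [Group Γ] {S : Finset Γ}

/-- The total space (space of graphs) `X = ⨆ i, X i`. -/
abbrev Total (A : SoficApprox Γ S) : Type := Σ i, A.X i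

/-- The bijection `σ(g)` of the total space acting as `σ_i(g)` on each `X i`. -/
def perm (A : SoficApprox Γ S) (g : Γ) : Equiv.Perm A.Total :=
  Equiv.sigmaCongrRight fun i => A.sigma i g

/-- The continuous extension `σ̄(g)` of `σ(g)` to the Stone–Čech compactification. -/
def permBar (A : SoficApprox Γ S) (g : Γ) : Ultrafilter A.Total → Ultrafilter A.Total :=
  Ultrafilter.map (A.perm g)

/-- The union `Y = ⨆ i, Y i` inside the total space. -/
def Ytot (A : SoficApprox Γ S) : Set A.Total := {p | p.2 ∈ A.Y p.1}

/-- `∂Y`: free ultrafilters containing `Y`. -/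
def bdY (A : SoficApprox Γ S) : Set (Ultrafilter A.Total) :=
  {η | (∀ p : A.Total, η ≠ pure p) ∧ A.Ytot ∈ η}

/-- The core `Z = ⋂_{g ∈ Γ} σ̄(g)''(∂Y)` of the sofic boundary. -/
def core (A : SoficApprox Γ S) : Set (Ultrafilter A.Total) :=
  ⋂ g : Γ, A.permBar g '' A.bdY

/-- The `S`-labelled graph structure on `X i`, with edges `{x, σ_i(s)(x)}` for `s ∈ S`. -/
def graph (A : SoficApprox Γ S) (i : ℕ) : SimpleGraph (A.X i) where
  Adj x y := x ≠ y ∧ ∃ s ∈ S, A.sigma i s x = y ∨ A.sigma i s y = x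
  symm := ⟨fun x y h => ⟨h.1.symm, by obtain ⟨s, hs, h'⟩ := h.2; exact ⟨s, hs, h'.symm⟩⟩⟩
  loopless := ⟨fun x h => h.1 rfl⟩

/-- An admissible metric on the total space: a metric restricting to the edge-path
metric on each `X i` and with distances between distinct components tending to `∞`. -/
def Admissible (A : SoficApprox Γ S) (d : A.Total → A.Total → ℝ) : Prop :=
  (∀ p q, d p q = d q p) ∧
  (∀ p q r, d p r ≤ d p q + d q r) ∧
  (∀ p q, d p q = 0 ↔ p = q) ∧
  (∀ p q, 0 ≤ d p q) ∧
  (∀ (i : ℕ) (x y : A.X i), d ⟨i, x⟩ ⟨i, y⟩ = ((A.graph i).dist x y : ℝ)) ∧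
  (∀ R : ℝ, ∃ N : ℕ, ∀ i j : ℕ, i ≠ j → N ≤ i + j →
      ∀ (x : A.X i) (y : A.X j), R < d ⟨i, x⟩ ⟨j, y⟩)

/-- The entourage `E_R` viewed inside `βX × βX`. -/
def ER (A : SoficApprox Γ S) (d : A.Total → A.Total → ℝ) (R : ℝ) :
    Set (Ultrafilter A.Total × Ultrafilter A.Total) :=
  {p | ∃ a b : A.Total, d a b ≤ R ∧ p = (pure a, pure b)}

end SoficApprox

/-- Word length of `g` with respect to the generating set `S`. -/
noncomputable def wordLength {Γ : Type u} [Group Γ] (S : Finset Γ) (g : Γ) : ℕ :=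
  sInf {n | ∃ l : List Γ, (∀ x ∈ l, x ∈ S) ∧ l.length = n ∧ l.prod = g}

/-- Word length of an element of a free group. -/
noncomputable def fgLength {α : Type v} (w : FreeGroup α) : ℕ :=
  sInf {n | ∃ l : List (α × Bool), l.length = n ∧ FreeGroup.mk l = w}

/-- The canonical homomorphism `F_S → Γ` extending the inclusion `S ↪ Γ`. -/
noncomputable def pihom {Γ : Type u} [Group Γ] (S : Finset Γ) : FreeGroup ↥S →* Γ :=
  FreeGroup.lift fun s => (s : Γ)

/-- The homomorphism `τ : F_S → Sym(X)` with `τ(s) = σ(s)` for `s ∈ S`. -/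
noncomputable def SoficApprox.tau {Γ : Type u} [Group Γ] {S : Finset Γ}
    (A : SoficApprox Γ S) : FreeGroup ↥S →* Equiv.Perm A.Total :=
  FreeGroup.lift fun s => A.perm (s : Γ)

noncomputable instance (α : Type v) : MeasurableSpace (Ultrafilter α) := borel _

instance (α : Type v) : BorelSpace (Ultrafilter α) := ⟨rfl⟩

/-!
The `ω`-limits of the proportions `|A ∩ X_i| / |X_i|` form a finitely additive probability `m`
on the subsets of `X`. In `βX` every clopen set is of the form `{η | B ∈ η}` and disjoint
compact sets are separated by clopen sets, so `K ↦ inf {m B | K ⊆ {η | B ∈ η}}` is a content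
whose measure `μ` satisfies `μ {η | B ∈ η} = m B`. Each `σ(g)` permutes every level `X_i`, so
`m` is `σ(g)`-invariant and hence so is `μ`. Since `ω` is free, `m` vanishes on points and
`μ` lives on free ultrafilters; `m Y = 1` because `|Y_i| ≥ (1 - ε_i)|X_i|`; and `Γ = ⋃ F_i` is
countable, so the core, a countable intersection of `μ`-conull sets `σ̄(g)''(∂Y)`, is conull.
-/

open MeasureTheory Filter Set Topology TopologicalSpace
open scoped NNReal ENNReal

namespace Ultrafilter

variable {α β : Type*}

theorem preimage_pure_mem_of_isOpen {U : Set (Ultrafilter α)} (hU : IsOpen U)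
    {η : Ultrafilter α} (hη : η ∈ U) : pure ⁻¹' U ∈ η := by
  obtain ⟨_, ⟨B, rfl⟩, hBη, hBU⟩ :=
    ultrafilterBasis_is_basis.exists_subset_of_mem_open hη hU
  exact mem_of_superset hBη fun a ha => hBU (mem_pure.2 ha)

theorem setOf_preimage_pure_mem {U : Set (Ultrafilter α)} (hU : IsClopen U) :
    {η : Ultrafilter α | pure ⁻¹' U ∈ η} = U := by
  ext η
  refine ⟨fun h => by_contra fun hη => ?_, preimage_pure_mem_of_isOpen hU.isOpen⟩
  exact η.compl_mem_iff_notMem.1 (preimage_pure_mem_of_isOpen hU.compl.isOpen hη) h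

theorem setOf_mem_subset_setOf_mem {B C : Set α} :
    {η : Ultrafilter α | B ∈ η} ⊆ {η | C ∈ η} ↔ B ⊆ C :=
  ⟨fun h a ha => mem_pure.1 (@h (pure a) (mem_pure.2 ha)), fun h _ hη => mem_of_superset hη h⟩

theorem exists_setOf_mem_between {K U : Set (Ultrafilter α)} (hK : IsClosed K) (hU : IsOpen U)
    (hKU : K ⊆ U) : ∃ B : Set α, K ⊆ {η | B ∈ η} ∧ {η | B ∈ η} ⊆ U := by
  obtain ⟨C, hC, hKC, hCU⟩ := exists_clopen_of_closed_subset_open hK hU hKU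
  refine ⟨pure ⁻¹' C, ?_, ?_⟩ <;> rwa [setOf_preimage_pure_mem hC]

theorem singleton_pure_eq (a : α) : {(pure a : Ultrafilter α)} = {η | {a} ∈ η} := by
  ext η
  refine ⟨fun h => h ▸ mem_pure.2 rfl, fun h => ?_⟩
  obtain ⟨b, rfl, hb⟩ := η.eq_pure_of_finite_mem (finite_singleton a) h
  exact hb

theorem le_cofinite_of_ne_pure {ω : Ultrafilter α} (hω : ∀ a, ω ≠ pure a) :
    (ω : Filter α) ≤ cofinite :=
  ω.le_cofinite_or_eq_pure.resolve_right fun ⟨a, ha⟩ => hω a ha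

theorem continuous_map (f : α → β) : Continuous (Ultrafilter.map f) := by
  refine ultrafilterBasis_is_basis.continuous_iff.2 ?_
  rintro _ ⟨B, rfl⟩
  exact ultrafilter_isOpen_basic (f ⁻¹' B)

noncomputable def mapHomeomorph (e : α ≃ β) : Ultrafilter α ≃ₜ Ultrafilter β where
  toFun := Ultrafilter.map e
  invFun := Ultrafilter.map e.symm
  left_inv η := by rw [map_map, e.symm_comp_self, map_id]
  right_inv η := by rw [map_map, e.self_comp_symm, map_id]
  continuous_toFun := continuous_map _
  continuous_invFun := continuous_map _

end Ultrafilter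

theorem MeasureTheory.measure_eq_one_of_mem_ae {α : Type*} [MeasurableSpace α] {μ : Measure α}
    [IsProbabilityMeasure μ] {s : Set α} (hs : s ∈ ae μ) : μ s = 1 :=
  (measure_congr (ae_eq_univ.2 (mem_ae_iff.1 hs))).trans measure_univ

theorem MeasureTheory.isSetRing_univ (α : Type*) : IsSetRing (univ : Set (Set α)) :=
  ⟨trivial, fun _ _ _ _ => trivial, fun _ _ _ _ => trivial⟩

namespace MeasureTheory.AddContent

variable {α : Type*} (m : AddContent ℝ≥0 (univ : Set (Set α)))

theorem apply_mono {B C : Set α} (h : B ⊆ C) : m B ≤ m C :=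
  addContent_mono (isSetRing_univ α).isSetSemiring trivial trivial h

noncomputable def clopenOuter (K : Set (Ultrafilter α)) : ℝ≥0 :=
  ⨅ B : {B : Set α // K ⊆ {η | B ∈ η}}, m B

variable {m}

instance (K : Set (Ultrafilter α)) : Nonempty {B : Set α // K ⊆ {η | B ∈ η}} :=
  ⟨⟨univ, fun η _ => (univ_mem : univ ∈ η)⟩⟩

theorem clopenOuter_le {K : Set (Ultrafilter α)} {B : Set α} (h : K ⊆ {η | B ∈ η}) :
    m.clopenOuter K ≤ m B :=
  ciInf_le (OrderBot.bddBelow _) (⟨B, h⟩ : {B : Set α // K ⊆ {η | B ∈ η}})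

theorem le_clopenOuter {K : Set (Ultrafilter α)} {c : ℝ≥0}
    (h : ∀ B : Set α, K ⊆ {η | B ∈ η} → c ≤ m B) : c ≤ m.clopenOuter K :=
  le_ciInf fun B => h B.1 B.2

theorem clopenOuter_mono {K L : Set (Ultrafilter α)} (h : K ⊆ L) :
    m.clopenOuter K ≤ m.clopenOuter L :=
  le_clopenOuter fun _ hB => clopenOuter_le (h.trans hB)

theorem clopenOuter_setOf_mem (B : Set α) : m.clopenOuter {η | B ∈ η} = m B :=
  (clopenOuter_le subset_rfl).antisymm
    (le_clopenOuter fun _ hC => m.apply_mono (Ultrafilter.setOf_mem_subset_setOf_mem.1 hC))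

theorem clopenOuter_union_le (K L : Set (Ultrafilter α)) :
    m.clopenOuter (K ∪ L) ≤ m.clopenOuter K + m.clopenOuter L := by
  refine NNReal.le_iInf_add_iInf fun B C => (clopenOuter_le (B := B.1 ∪ C.1) ?_).trans ?_
  · exact union_subset (B.2.trans (Ultrafilter.setOf_mem_subset_setOf_mem.2 subset_union_left))
      (C.2.trans (Ultrafilter.setOf_mem_subset_setOf_mem.2 subset_union_right))
  · exact addContent_union_le (isSetRing_univ α) trivial trivial

theorem clopenOuter_union_of_disjoint {K L : Set (Ultrafilter α)} (hK : IsClosed K)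
    (hL : IsClosed L) (h : Disjoint K L) :
    m.clopenOuter (K ∪ L) = m.clopenOuter K + m.clopenOuter L := by
  refine (clopenOuter_union_le K L).antisymm (le_clopenOuter fun C hC => ?_)
  obtain ⟨B, hKB, hBL⟩ := Ultrafilter.exists_setOf_mem_between hK hL.isOpen_compl
    h.subset_compl_right
  have hLB : L ⊆ {η | Bᶜ ∈ η} := fun η hη =>
    η.compl_mem_iff_notMem.2 fun hB => hBL hB hη
  calc m.clopenOuter K + m.clopenOuter L ≤ m (C ∩ B) + m (C ∩ Bᶜ) :=
        add_le_add (clopenOuter_le fun η hη => inter_mem (hC (Or.inl hη)) (hKB hη))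
          (clopenOuter_le fun η hη => inter_mem (hC (Or.inr hη)) (hLB hη))
    _ = m C := by
        rw [← addContent_union (isSetRing_univ α) trivial trivial
          (disjoint_compl_right.mono inter_subset_right inter_subset_right),
          inter_union_compl]

variable (m)

noncomputable def ultrafilterContent : Content (Ultrafilter α) where
  toFun K := m.clopenOuter K
  mono' _ _ := clopenOuter_mono
  sup_disjoint' K L h hK hL := by
    simp only [Compacts.coe_sup]
    exact clopenOuter_union_of_disjoint hK hL h
  sup_le' K L := by
    simp only [Compacts.coe_sup]
    exact clopenOuter_union_le (K : Set (Ultrafilter α)) L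

noncomputable def ultrafilterMeasure : Measure (Ultrafilter α) :=
  m.ultrafilterContent.measure

theorem ultrafilterMeasure_setOf_mem (B : Set α) :
    m.ultrafilterMeasure {η | B ∈ η} = m B := by
  have hopen := ultrafilter_isOpen_basic B
  rw [ultrafilterMeasure, Content.measure_apply _ hopen.measurableSet,
    Content.outerMeasure_of_isOpen _ _ hopen,
    Content.innerContent_of_isCompact _ (ultrafilter_isClosed_basic B).isCompact hopen]
  exact congrArg ENNReal.ofNNReal (clopenOuter_setOf_mem B)

theorem isProbabilityMeasure_ultrafilterMeasure (h : m univ = 1) :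
    IsProbabilityMeasure m.ultrafilterMeasure := by
  constructor
  have huniv : {η : Ultrafilter α | univ ∈ η} = univ := eq_univ_of_forall fun η => univ_mem
  rw [← huniv, ultrafilterMeasure_setOf_mem, h, ENNReal.coe_one]

variable {m}

theorem apply_preimage_symm {e : α ≃ α} (he : ∀ B, m (e ⁻¹' B) = m B) (B : Set α) :
    m (e.symm ⁻¹' B) = m B := by
  rw [← he, e.preimage_symm_preimage]

theorem clopenOuter_image_map {e : α ≃ α} (he : ∀ B, m (e ⁻¹' B) = m B)
    (K : Set (Ultrafilter α)) : m.clopenOuter (Ultrafilter.map e '' K) = m.clopenOuter K := by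
  refine le_antisymm (le_clopenOuter fun B hB => ?_) (le_clopenOuter fun B hB => ?_)
  · refine (clopenOuter_le (B := e.symm ⁻¹' B) ?_).trans (apply_preimage_symm he B).le
    rintro _ ⟨η, hη, rfl⟩
    simpa [Ultrafilter.mem_map, e.preimage_symm_preimage] using hB hη
  · refine (clopenOuter_le (B := e ⁻¹' B) fun η hη => ?_).trans (he B).le
    exact Ultrafilter.mem_map.1 (hB ⟨η, hη, rfl⟩)

theorem measurePreserving_map {e : α ≃ α} (he : ∀ B, m (e ⁻¹' B) = m B) :
    MeasurePreserving (Ultrafilter.map e) m.ultrafilterMeasure m.ultrafilterMeasure := by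
  have hcont := Ultrafilter.continuous_map e
  refine ⟨hcont.measurable, Measure.ext fun s hs => ?_⟩
  rw [Measure.map_apply hcont.measurable hs, ultrafilterMeasure,
    Content.measure_apply _ (hcont.measurable hs), Content.measure_apply _ hs]
  exact m.ultrafilterContent.outerMeasure_preimage (Ultrafilter.mapHomeomorph e)
    (fun K => congrArg ENNReal.ofNNReal (clopenOuter_image_map he K)) s

theorem image_map_mem_ae {e : α ≃ α} (he : ∀ B, m (e ⁻¹' B) = m B)
    {s : Set (Ultrafilter α)} (hs : s ∈ ae m.ultrafilterMeasure) :
    Ultrafilter.map e '' s ∈ ae m.ultrafilterMeasure := by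
  rw [show Ultrafilter.map e '' s = Ultrafilter.map e.symm ⁻¹' s from
    (Ultrafilter.mapHomeomorph e).image_eq_preimage_symm s]
  exact (measurePreserving_map (apply_preimage_symm he)).quasiMeasurePreserving.tendsto_ae hs

theorem ae_ne_pure [Countable α] (h : ∀ a, m {a} = 0) :
    ∀ᵐ η ∂m.ultrafilterMeasure, ∀ a, η ≠ pure a :=
  ae_all_iff.2 fun a => (measure_eq_zero_iff_ae_notMem (s := {pure a})).1 (by
    rw [Ultrafilter.singleton_pure_eq, ultrafilterMeasure_setOf_mem, h, ENNReal.coe_zero])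

section Ultralimit

variable {ι : Type*} (ω : Ultrafilter ι) (m : ι → AddContent ℝ≥0 (univ : Set (Set α)))

theorem tendsto_limUnder_apply (hm : ∀ i, m i univ = 1) (B : Set α) :
    Tendsto (fun i => m i B) ω (𝓝 (limUnder (ω : Filter ι) fun i => m i B)) := by
  refine tendsto_nhds_limUnder ?_
  obtain ⟨c, -, hc⟩ := (isCompact_Icc (a := (0 : ℝ≥0)) (b := 1)).ultrafilter_le_nhds
    (ω.map fun i => m i B) (by
      rw [Ultrafilter.coe_map, le_principal_iff]
      exact mem_map.2 (univ_mem' fun i => ⟨zero_le, hm i ▸ (m i).apply_mono (subset_univ B)⟩))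
  exact ⟨c, hc⟩

noncomputable def ultralimit (hm : ∀ i, m i univ = 1) :
    AddContent ℝ≥0 (univ : Set (Set α)) :=
  (isSetRing_univ α).addContent_of_union (fun B => limUnder (ω : Filter ι) fun i => m i B)
    (tendsto_nhds_unique (tendsto_limUnder_apply ω m hm ∅) (by simp))
    fun {B C} _ _ h => tendsto_nhds_unique (tendsto_limUnder_apply ω m hm (B ∪ C))
      (((tendsto_limUnder_apply ω m hm B).add (tendsto_limUnder_apply ω m hm C)).congr
        fun i => (addContent_union (isSetRing_univ α) trivial trivial h).symm)

variable {ω m} {hm : ∀ i, m i univ = 1}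

theorem tendsto_ultralimit (B : Set α) :
    Tendsto (fun i => m i B) ω (𝓝 (ultralimit ω m hm B)) :=
  tendsto_limUnder_apply ω m hm B

theorem ultralimit_eq_of_tendsto {B : Set α} {c : ℝ≥0}
    (h : Tendsto (fun i => m i B) ω (𝓝 c)) :
    ultralimit ω m hm B = c :=
  tendsto_nhds_unique (tendsto_ultralimit B) h

theorem ultralimit_univ : ultralimit ω m hm univ = 1 :=
  ultralimit_eq_of_tendsto (tendsto_const_nhds.congr fun i => (hm i).symm)

end Ultralimit

section CountingDensity

variable {β : Type*} [Finite β]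

noncomputable def countingDensity (f : β → α) : AddContent ℝ≥0 (univ : Set (Set α)) :=
  (isSetRing_univ α).addContent_of_union (fun B => (f ⁻¹' B).ncard / Nat.card β) (by simp)
    fun _ _ h => by
      simp only [preimage_union]
      rw [ncard_union_eq (h.preimage f), Nat.cast_add, add_div]

theorem countingDensity_apply (f : β → α) (B : Set α) :
    countingDensity f B = (f ⁻¹' B).ncard / Nat.card β :=
  rfl

theorem countingDensity_univ [Nonempty β] (f : β → α) : countingDensity f univ = 1 := by
  rw [countingDensity_apply, preimage_univ, ncard_univ,
    div_self (Nat.cast_ne_zero.2 Nat.card_pos.ne')]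

theorem countingDensity_preimage (f : β → α) (g : α → α) (B : Set α) :
    countingDensity f (g ⁻¹' B) = countingDensity (g ∘ f) B :=
  rfl

theorem countingDensity_comp_equiv (f : β → α) (e : β ≃ β) :
    countingDensity (f ∘ e) = countingDensity f := by
  ext B
  rw [countingDensity_apply, countingDensity_apply, preimage_comp,
    ncard_preimage_of_injective_subset_range e.injective (by simp)]

end CountingDensity

end MeasureTheory.AddContent

attribute [instance] SoficApprox.finX SoficApprox.neX

namespace SoficApprox

open AddContent

variable {Γ : Type u} [Group Γ] {S : Finset Γ}

theorem countable_group (A : SoficApprox Γ S) : Countable Γ := by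
  have hcover : (⋃ i, (A.F i : Set Γ)) = univ :=
    eq_univ_of_forall fun g => mem_iUnion.2 (A.F_exhausts g)
  exact countable_univ_iff.1 (hcover ▸ countable_iUnion fun i => (A.F i).countable_toSet)

variable (A : SoficApprox Γ S)

noncomputable def levelDensity (i : ℕ) : AddContent ℝ≥0 (univ : Set (Set A.Total)) :=
  countingDensity (Sigma.mk i : A.X i → A.Total)

noncomputable def limitDensity (ω : Ultrafilter ℕ) :
    AddContent ℝ≥0 (univ : Set (Set A.Total)) :=
  ultralimit ω A.levelDensity fun _ => countingDensity_univ _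

theorem coe_levelDensity_apply (i : ℕ) (B : Set A.Total) :
    (A.levelDensity i B : ℝ) =
      (({x : A.X i | (⟨i, x⟩ : A.Total) ∈ B}).ncard : ℝ) / (Nat.card (A.X i) : ℝ) := by
  rw [levelDensity, countingDensity_apply, NNReal.coe_div, NNReal.coe_natCast, NNReal.coe_natCast]
  rfl

variable (ω : Ultrafilter ℕ)

theorem tendsto_limitDensity (B : Set A.Total) :
    Tendsto (fun i : ℕ =>
        (({x : A.X i | (⟨i, x⟩ : A.Total) ∈ B}).ncard : ℝ) / (Nat.card (A.X i) : ℝ))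
      ω (𝓝 (A.limitDensity ω B : ℝ)) :=
  (NNReal.tendsto_coe.2 (tendsto_ultralimit B)).congr (A.coe_levelDensity_apply · B)

theorem limitDensity_preimage_perm (g : Γ) (B : Set A.Total) :
    A.limitDensity ω (A.perm g ⁻¹' B) = A.limitDensity ω B := by
  refine ultralimit_eq_of_tendsto ((tendsto_ultralimit B).congr fun i => ?_)
  rw [levelDensity, countingDensity_preimage, ← countingDensity_comp_equiv _ (A.sigma i g)]
  rfl

variable {ω}

theorem limitDensity_singleton (hω : ∀ n, ω ≠ pure n) (p : A.Total) :
    A.limitDensity ω {p} = 0 := by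
  refine ultralimit_eq_of_tendsto (tendsto_const_nhds.congr' ?_)
  filter_upwards [Ultrafilter.le_cofinite_of_ne_pure hω (eventually_cofinite_ne p.1)] with i hi
  have hempty : (Sigma.mk i : A.X i → A.Total) ⁻¹' {p} = ∅ :=
    eq_empty_of_forall_notMem fun x hx => hi (congrArg Sigma.fst hx)
  rw [levelDensity, countingDensity_apply, hempty, ncard_empty, Nat.cast_zero, zero_div]

theorem limitDensity_Ytot (hω : ∀ n, ω ≠ pure n) : A.limitDensity ω A.Ytot = 1 := by
  have hatTop : (ω : Filter ℕ) ≤ atTop :=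
    Nat.cofinite_eq_atTop ▸ Ultrafilter.le_cofinite_of_ne_pure hω
  have hlower : Tendsto (fun i => 1 - A.eps i) ω (𝓝 1) := by
    simpa using (tendsto_const_nhds.sub A.eps_lim).mono_left hatTop
  have hlarge : ∀ i, 1 - A.eps i ≤ (A.levelDensity i A.Ytot : ℝ) := fun i => by
    rw [coe_levelDensity_apply, le_div_iff₀ (Nat.cast_pos.2 Nat.card_pos)]
    exact A.Y_large i
  refine le_antisymm (ultralimit_univ ▸ (A.limitDensity ω).apply_mono (subset_univ _)) ?_
  exact_mod_cast le_of_tendsto_of_tendsto' hlower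
    (NNReal.tendsto_coe.2 (tendsto_ultralimit A.Ytot)) hlarge

end SoficApprox

open SoficApprox MeasureTheory in
theorem exists_invariant_measure_on_sofic_boundary_general
    {Γ : Type u} [Group Γ] {S : Finset Γ}
    (A : SoficApprox Γ S)
    (ω : Ultrafilter ℕ) (hω : ∀ n : ℕ, ω ≠ pure n) :
    ∃ μ : Measure (Ultrafilter A.Total), IsProbabilityMeasure μ ∧
      (∀ B : Set A.Total,
        Filter.Tendsto
          (fun i : ℕ =>
            (({x : A.X i | (⟨i, x⟩ : A.Total) ∈ B}).ncard : ℝ) / (Nat.card (A.X i) : ℝ))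
          (ω : Filter ℕ)
          (nhds ((μ {η : Ultrafilter A.Total | B ∈ η}).toReal))) ∧
      (∀ g : Γ, Measure.map (A.permBar g) μ = μ) ∧
      μ A.core = 1 ∧
      μ {η : Ultrafilter A.Total | ∀ p : A.Total, η ≠ pure p} = 1 ∧
      μ A.bdY = 1 := by
  have := A.countable_group
  set m := A.limitDensity ω
  have hprob := m.isProbabilityMeasure_ultrafilterMeasure AddContent.ultralimit_univ
  have hperm : ∀ g, ∀ B, m (A.perm g ⁻¹' B) = m B := A.limitDensity_preimage_perm ω
  have hfree : {η : Ultrafilter A.Total | ∀ p, η ≠ pure p} ∈ ae m.ultrafilterMeasure :=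
    m.ae_ne_pure (A.limitDensity_singleton hω)
  have hbdY : A.bdY ∈ ae m.ultrafilterMeasure := by
    refine inter_mem hfree
      ((mem_ae_iff_prob_eq_one (ultrafilter_isOpen_basic _).measurableSet).2 ?_)
    rw [m.ultrafilterMeasure_setOf_mem, A.limitDensity_Ytot hω, ENNReal.coe_one]
  have hcore : A.core ∈ ae m.ultrafilterMeasure :=
    countable_iInter_mem.2 fun g => AddContent.image_map_mem_ae (hperm g) hbdY
  refine ⟨m.ultrafilterMeasure, hprob, fun B => ?_,
    fun g => (AddContent.measurePreserving_map (hperm g)).map_eq,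
    measure_eq_one_of_mem_ae hcore, measure_eq_one_of_mem_ae hfree, measure_eq_one_of_mem_ae hbdY⟩
  rw [m.ultrafilterMeasure_setOf_mem, ENNReal.coe_toReal]
  exact A.tendsto_limitDensity ω B

open SoficApprox MeasureTheory in
/-- **The invariant measure on the sofic boundary.**
Fixing a free ultrafilter `ω` on `ℕ`, there is a Borel probability measure `μ` on `βX`
which is the `ω`-limit of the normalised counting measures of the `X i`, is invariant
under every `σ̄(g)`, gives the core `Z` full measure, and gives the set of free
ultrafilters and `∂Y` full measure. -/
theorem exists_invariant_measure_on_sofic_boundary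
    {Γ : Type u} [Group Γ] {S : Finset Γ}
    (hSsymm : ∀ s ∈ S, s⁻¹ ∈ S)
    (hSgen : Subgroup.closure (S : Set Γ) = ⊤)
    (A : SoficApprox Γ S)
    (ω : Ultrafilter ℕ) (hω : ∀ n : ℕ, ω ≠ pure n) :
    ∃ μ : Measure (Ultrafilter A.Total), IsProbabilityMeasure μ ∧
      (∀ B : Set A.Total,
        Filter.Tendsto
          (fun i : ℕ =>
            (({x : A.X i | (⟨i, x⟩ : A.Total) ∈ B}).ncard : ℝ) / (Nat.card (A.X i) : ℝ))
          (ω : Filter ℕ)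
          (nhds ((μ {η : Ultrafilter A.Total | B ∈ η}).toReal))) ∧
      (∀ g : Γ, Measure.map (A.permBar g) μ = μ) ∧
      μ A.core = 1 ∧
      μ {η : Ultrafilter A.Total | ∀ p : A.Total, η ≠ pure p} = 1 ∧
      μ A.bdY = 1 :=
  exists_invariant_measure_on_sofic_boundary_general A ω hω
end

section
/- For all g, h ∈ Γ and every η ∈ Z, if σ̄(g)(η) = σ̄(h)(η) then g = h. Equivalently, for g ≠ h in Γ the sets {(η, σ̄(g)(η)) : η ∈ Z} and {(η, σ̄(h)(η)) : η ∈ Z} are disjoint. -/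
open scoped BigOperators symmDiff Classical

universe u v

/-!
Write `η = σ̄(g⁻¹) ζ` with `ζ ∈ ∂Y`. Since `ζ` is free and contains `Y`, it concentrates on points
of `Y_i` with `i` arbitrarily large, where `σ` is multiplicative on any prescribed finite set of
group elements and `σ(w)` has no fixed points for a prescribed `w ≠ 1`. Hence `σ̄` acts on `ζ`
like a group action, and `σ̄(g) η = σ̄(h) η` gives `σ̄(h g⁻¹) ζ = ζ`. This is impossible for
`w = h g⁻¹ ≠ 1`: a fixed-point-free permutation of a finite set admits a 3-colouring `c` with
`c ∘ σ(w) ≠ c` pointwise, and `ζ` pushed forward along `c` is a principal ultrafilter on the three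
colours, which would have to contain both `c x` and `c (σ(w) x)` for some `x`.
-/

open Filter

theorem Equiv.Perm.exists_three_coloring {V : Type*} (π : Equiv.Perm V) (W : Finset V)
    (hW : ∀ y ∈ W, π y ≠ y) : ∃ c : V → Fin 3, ∀ y ∈ W, c (π y) ≠ c y := by
  classical
  induction W using Finset.induction_on with
  | empty => exact ⟨fun _ => 0, by simp⟩
  | @insert a s ha ih =>
    obtain ⟨c, hc⟩ := ih fun y hy => hW y (Finset.mem_insert_of_mem hy)
    have hπa : π a ≠ a := hW a (Finset.mem_insert_self a s)
    -- recolour `π a` avoiding the colours of its two neighbours `a` and `π (π a)`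
    obtain ⟨v, hva, hvππa⟩ :=
      (by decide : ∀ x y : Fin 3, ∃ v : Fin 3, v ≠ x ∧ v ≠ y) (c a) (c (π (π a)))
    refine ⟨Function.update c (π a) v, fun y hy => ?_⟩
    rcases Finset.mem_insert.1 hy with rfl | hys
    · rwa [Function.update_self, Function.update_of_ne hπa.symm]
    · by_cases hya : y = π a
      · subst hya
        rw [Function.update_self, Function.update_of_ne (π.injective.ne hπa)]
        exact hvππa.symm
      · have hya' : y ≠ a := fun h => ha (h ▸ hys)
        rw [Function.update_of_ne (π.injective.ne hya'), Function.update_of_ne hya]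
        exact hc y hys

theorem Equiv.Perm.exists_three_coloring_sigmaCongrRight {ι : Type*} {X : ι → Type*}
    [∀ i, Finite (X i)] (π : ∀ i, Equiv.Perm (X i)) (B : Set (Σ i, X i))
    (hB : ∀ p ∈ B, Equiv.sigmaCongrRight π p ≠ p) :
    ∃ c : (Σ i, X i) → Fin 3, ∀ p ∈ B, c (Equiv.sigmaCongrRight π p) ≠ c p := by
  have hcomponent (i : ι) : ∃ c : X i → Fin 3, ∀ x, ⟨i, x⟩ ∈ B → c (π i x) ≠ c x := by
    obtain ⟨c, hc⟩ := (π i).exists_three_coloring (Set.toFinite {x | ⟨i, x⟩ ∈ B}).toFinset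
      fun x hx h => hB ⟨i, x⟩ (by simpa using hx) (by simp [h])
    exact ⟨c, fun x hx => hc x (by simpa using hx)⟩
  choose c hc using hcomponent
  exact ⟨fun p => c p.1 p.2, fun ⟨i, x⟩ hp => hc i x hp⟩

namespace Ultrafilter

variable {α β : Type*}

theorem map_congr {m₁ m₂ : α → β} {ζ : Ultrafilter α} (h : m₁ =ᶠ[ζ] m₂) :
    ζ.map m₁ = ζ.map m₂ :=
  coe_injective (by simpa only [coe_map] using Filter.map_congr h)

theorem map_ne_self_of_eventually_ne [Finite β] {f : α → α} {c : α → β} {ζ : Ultrafilter α}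
    (h : ∀ᶠ x in ζ, c (f x) ≠ c x) : ζ.map f ≠ ζ := by
  intro hf
  obtain ⟨b, hb⟩ := (ζ.map c).eq_pure_of_finite
  have hc : c ⁻¹' {b} ∈ ζ := mem_map.1 (hb ▸ mem_pure.2 rfl)
  have hcf : f ⁻¹' (c ⁻¹' {b}) ∈ ζ := mem_map.1 (hf.symm ▸ hc)
  obtain ⟨x, hne, hx, hfx⟩ := (h.and (inter_mem hc hcf)).exists
  exact hne (hfx.trans hx.symm)

theorem tendsto_sigma_fst_cofinite {ι : Type*} {X : ι → Type*} [∀ i, Finite (X i)]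
    {ζ : Ultrafilter (Σ i, X i)} (hζ : ∀ p, ζ ≠ pure p) :
    Tendsto Sigma.fst (ζ : Filter (Σ i, X i)) cofinite := by
  rcases ζ.le_cofinite_or_eq_pure with hle | ⟨p, rfl⟩
  · refine (Tendsto.cofinite_of_finite_preimage_singleton fun i => ?_).mono_left hle
    rw [← Set.range_sigmaMk]
    exact Set.finite_range _
  · exact absurd rfl (hζ p)

end Ultrafilter

namespace SoficApprox

variable {Γ : Type*} [Group Γ] {S : Finset Γ} (A : SoficApprox Γ S)

theorem eventually_mem_F (g : Γ) : ∀ᶠ i in atTop, g ∈ A.F i :=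
  let ⟨i, hi⟩ := A.F_exhausts g
  eventually_atTop.2 ⟨i, fun _ hj => A.F_mono hj hi⟩

variable {A}

theorem eventually_mem_F_fst {ζ : Ultrafilter A.Total} (hζ : ζ ∈ A.bdY) (g : Γ) :
    ∀ᶠ p : A.Total in ζ, g ∈ A.F p.1 := by
  have := A.finX
  have hfst := Ultrafilter.tendsto_sigma_fst_cofinite hζ.1
  rw [Nat.cofinite_eq_atTop] at hfst
  exact hfst.eventually (A.eventually_mem_F g)

theorem sigma_one_apply {i : ℕ} {y : A.X i} (hy : y ∈ A.Y i) : A.sigma i 1 y = y :=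
  (A.sigma i 1).injective (by rw [A.sigma_mul i 1 (A.F_one i) 1 (A.F_one i) y hy, one_mul])

theorem permBar_one {ζ : Ultrafilter A.Total} (hY : A.Ytot ∈ ζ) : A.permBar 1 ζ = ζ := by
  rw [permBar, ← ζ.map_id]
  refine Ultrafilter.map_congr ?_
  filter_upwards [hY] with ⟨i, y⟩ hy
  simp only [perm, Equiv.sigmaCongrRight_apply, id, sigma_one_apply hy]

theorem permBar_permBar {ζ : Ultrafilter A.Total} (hζ : ζ ∈ A.bdY) (g h : Γ) :
    A.permBar g (A.permBar h ζ) = A.permBar (g * h) ζ := by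
  rw [permBar, permBar, permBar, Ultrafilter.map_map]
  refine Ultrafilter.map_congr ?_
  filter_upwards [hζ.2, eventually_mem_F_fst hζ g, eventually_mem_F_fst hζ h] with ⟨i, y⟩ hy hg hh
  simp only [Function.comp_apply, perm, Equiv.sigmaCongrRight_apply]
  rw [A.sigma_mul i g hg h hh y hy]

theorem permBar_ne_self {ζ : Ultrafilter A.Total} (hζ : ζ ∈ A.bdY) {w : Γ} (hw : w ≠ 1) :
    A.permBar w ζ ≠ ζ := by
  have := A.finX
  set B : Set A.Total := {p | p.2 ∈ A.Y p.1 ∧ w ∈ A.F p.1}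
  have hB : B ∈ ζ := inter_mem hζ.2 (eventually_mem_F_fst hζ w)
  obtain ⟨c, hc⟩ := Equiv.Perm.exists_three_coloring_sigmaCongrRight (fun i => A.sigma i w) B
    fun ⟨i, y⟩ ⟨hy, hwF⟩ h => A.sigma_free i w hwF hw y hy (by simpa using h)
  exact Ultrafilter.map_ne_self_of_eventually_ne (Filter.mem_of_superset hB hc)

end SoficApprox

open SoficApprox in
theorem permBar_injective_on_core_general
    {Γ : Type u} [Group Γ] {S : Finset Γ}
    (A : SoficApprox Γ S) :
    (∀ g h : Γ, ∀ η ∈ A.core, A.permBar g η = A.permBar h η → g = h) ∧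
    (∀ g h : Γ, g ≠ h →
      Disjoint
        {p : Ultrafilter A.Total × Ultrafilter A.Total |
          ∃ η ∈ A.core, p = (η, A.permBar g η)}
        {p : Ultrafilter A.Total × Ultrafilter A.Total |
          ∃ η ∈ A.core, p = (η, A.permBar h η)}) := by
  have eq_of_permBar_eq : ∀ g h : Γ, ∀ η ∈ A.core, A.permBar g η = A.permBar h η → g = h := by
    intro g h η hη hgh
    obtain ⟨ζ, hζ, rfl⟩ := Set.mem_iInter.1 hη g⁻¹
    rw [permBar_permBar hζ, permBar_permBar hζ, mul_inv_cancel, permBar_one hζ.2] at hgh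
    exact (mul_inv_eq_one.1 (by_contra fun hw => permBar_ne_self hζ hw hgh.symm)).symm
  refine ⟨eq_of_permBar_eq, fun g h hne => Set.disjoint_left.2 ?_⟩
  rintro _ ⟨η, hη, rfl⟩ ⟨η', -, hp⟩
  obtain ⟨rfl, hp⟩ := Prod.mk.inj hp
  exact hne (eq_of_permBar_eq g h η hη hp)

open SoficApprox in
/-- **Disjointness of the `σ`-diagonals over the core.**
If `σ̄(g)(η) = σ̄(h)(η)` for some `η` in the core `Z`, then `g = h`; equivalently, for
`g ≠ h` the sets `{(η, σ̄(g)(η)) : η ∈ Z}` and `{(η, σ̄(h)(η)) : η ∈ Z}` are disjoint. -/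
theorem permBar_injective_on_core
    {Γ : Type u} [Group Γ] {S : Finset Γ}
    (hSsymm : ∀ s ∈ S, s⁻¹ ∈ S)
    (hSgen : Subgroup.closure (S : Set Γ) = ⊤)
    (A : SoficApprox Γ S) :
    (∀ g h : Γ, ∀ η ∈ A.core, A.permBar g η = A.permBar h η → g = h) ∧
    (∀ g h : Γ, g ≠ h →
      Disjoint
        {p : Ultrafilter A.Total × Ultrafilter A.Total |
          ∃ η ∈ A.core, p = (η, A.permBar g η)}
        {p : Ultrafilter A.Total × Ultrafilter A.Total |
          ∃ η ∈ A.core, p = (η, A.permBar h η)}) :=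
  permBar_injective_on_core_general A
end
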